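/- Under the hypotheses of the (IG) iteration one-step estimate, for all n ∈ ℕ the iterate satisfies ‖x_{n+1} - x*‖ ≤ (∏_{k=0}^{n} [1 - (1-α₁)a_k][α₁ + (α₂-α₁)b_k]) · ‖x₀ - x*‖. -/

import Mathlib

/-!
Both half-steps of (IG) are convex combinations of points whose distance to the common fixed
point `x*` is controlled by the Lipschitz constants, so one step contracts `‖x_n - x*‖` by the
factor `[1 - (1-α₁)a_n][α₁ + (α₂-α₁)b_n]`; both factors are nonnegative, so the bounds telescope.
-/

open Finset

theorem le_prod_range_mul_of_le_mul {R : Type*} [CommSemiring R] [PartialOrder R]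
    [IsOrderedRing R] {e c : ℕ → R} (hc : ∀ k, 0 ≤ c k) (h : ∀ k, e (k + 1) ≤ c k * e k) :
    ∀ n, e n ≤ (∏ k ∈ range n, c k) * e 0
  | 0 => by simp
  | n + 1 =>
    calc e (n + 1) ≤ c n * e n := h n
      _ ≤ c n * ((∏ k ∈ range n, c k) * e 0) :=
        mul_le_mul_of_nonneg_left (le_prod_range_mul_of_le_mul hc h n) (hc n)
      _ = (∏ k ∈ range (n + 1), c k) * e 0 := by rw [prod_range_succ]; ring

theorem norm_sub_le_of_isFixedPt {E : Type*} [SeminormedAddGroup E] {Ω : Set E} {T : E → E}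
    {α : ℝ} (hT : ∀ ξ ∈ Ω, ∀ η ∈ Ω, ‖T ξ - T η‖ ≤ α * ‖ξ - η‖) {p : E} (hp : p ∈ Ω)
    (hfix : Function.IsFixedPt T p) ⦃u : E⦄ (hu : u ∈ Ω) : ‖T u - p‖ ≤ α * ‖u - p‖ := by
  simpa only [hfix.eq] using hT u hu p hp

section IterationSteps

variable {X : Type*} [NormedAddCommGroup X] [NormedSpace ℝ X]

theorem norm_convexCombo_sub_le {t : ℝ} (ht : t ∈ Set.Icc (0 : ℝ) 1) (u v p : X) :
    ‖(1 - t) • u + t • v - p‖ ≤ (1 - t) * ‖u - p‖ + t * ‖v - p‖ := by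
  have hsplit : (1 - t) • u + t • v - p = (1 - t) • (u - p) + t • (v - p) := by module
  rw [hsplit]
  refine (norm_add_le _ _).trans_eq ?_
  rw [norm_smul_of_nonneg (by linarith [ht.2]), norm_smul_of_nonneg ht.1]

theorem norm_mann_step_sub_le {T : X → X} {u p : X} {α t : ℝ} (ht : t ∈ Set.Icc (0 : ℝ) 1)
    (hT : ‖T u - p‖ ≤ α * ‖u - p‖) :
    ‖(1 - t) • u + t • T u - p‖ ≤ (1 - (1 - α) * t) * ‖u - p‖ := by
  have := mul_le_mul_of_nonneg_left hT ht.1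
  linarith [norm_convexCombo_sub_le ht u (T u) p]

theorem norm_combo_step_sub_le {T₁ T₂ : X → X} {u p : X} {α₁ α₂ t : ℝ}
    (ht : t ∈ Set.Icc (0 : ℝ) 1) (hT₁ : ‖T₁ u - p‖ ≤ α₁ * ‖u - p‖)
    (hT₂ : ‖T₂ u - p‖ ≤ α₂ * ‖u - p‖) :
    ‖(1 - t) • T₁ u + t • T₂ u - p‖ ≤ (α₁ + (α₂ - α₁) * t) * ‖u - p‖ := by
  have h₁ := mul_le_mul_of_nonneg_left hT₁ (sub_nonneg.2 ht.2)
  have h₂ := mul_le_mul_of_nonneg_left hT₂ ht.1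
  linarith [norm_convexCombo_sub_le ht (T₁ u) (T₂ u) p]

end IterationSteps

theorem IG_upper_bound_general {X : Type*} [NormedAddCommGroup X] [NormedSpace ℝ X]
    (Ω : Set X) (α₁ α₂ : ℝ)
    (hα₁ : α₁ ∈ Set.Icc (0 : ℝ) 1) (hα₂ : α₂ ∈ Set.Icc (0 : ℝ) 1)
    (T₁ T₂ : X → X)
    (hT₁ : ∀ ξ ∈ Ω, ∀ η ∈ Ω, ‖T₁ ξ - T₁ η‖ ≤ α₁ * ‖ξ - η‖)
    (hT₂ : ∀ ξ ∈ Ω, ∀ η ∈ Ω, ‖T₂ ξ - T₂ η‖ ≤ α₂ * ‖ξ - η‖)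
    (xs : X) (hxs : xs ∈ Ω) (hfix₁ : T₁ xs = xs) (hfix₂ : T₂ xs = xs)
    (a b : ℕ → ℝ)
    (ha : ∀ n, a n ∈ Set.Icc (0 : ℝ) 1) (hb : ∀ n, b n ∈ Set.Icc (0 : ℝ) 1)
    (x y : ℕ → X) (hxΩ : ∀ n, x n ∈ Ω) (hyΩ : ∀ n, y n ∈ Ω)
    (hy : ∀ n, y n = (1 - a n) • x n + a n • T₁ (x n))
    (hx : ∀ n, x (n + 1) = (1 - b n) • T₁ (y n) + b n • T₂ (y n)) :
    ∀ n, ‖x (n + 1) - xs‖ ≤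
      (∏ k ∈ Finset.range (n + 1),
        (1 - (1 - α₁) * a k) * (α₁ + (α₂ - α₁) * b k)) * ‖x 0 - xs‖ := by
  have hT₁xs := norm_sub_le_of_isFixedPt hT₁ hxs hfix₁
  have hT₂xs := norm_sub_le_of_isFixedPt hT₂ hxs hfix₂
  have hmann_nonneg : ∀ k, 0 ≤ 1 - (1 - α₁) * a k := fun k => by
    linarith [mul_nonneg hα₁.1 (ha k).1, (ha k).2]
  have hcombo_nonneg : ∀ k, 0 ≤ α₁ + (α₂ - α₁) * b k := fun k => by
    linarith [mul_nonneg hα₁.1 (sub_nonneg.2 (hb k).2), mul_nonneg hα₂.1 (hb k).1]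
  have hstep : ∀ k, ‖x (k + 1) - xs‖ ≤
      (1 - (1 - α₁) * a k) * (α₁ + (α₂ - α₁) * b k) * ‖x k - xs‖ := fun k => by
    have hyk : ‖y k - xs‖ ≤ (1 - (1 - α₁) * a k) * ‖x k - xs‖ := by
      rw [hy k]; exact norm_mann_step_sub_le (ha k) (hT₁xs (hxΩ k))
    have hxk : ‖x (k + 1) - xs‖ ≤ (α₁ + (α₂ - α₁) * b k) * ‖y k - xs‖ := by
      rw [hx k]; exact norm_combo_step_sub_le (hb k) (hT₁xs (hyΩ k)) (hT₂xs (hyΩ k))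
    calc ‖x (k + 1) - xs‖ ≤ (α₁ + (α₂ - α₁) * b k) * ((1 - (1 - α₁) * a k) * ‖x k - xs‖) :=
          hxk.trans (mul_le_mul_of_nonneg_left hyk (hcombo_nonneg k))
      _ = _ := by ring
  exact fun n => le_prod_range_mul_of_le_mul (e := fun k => ‖x k - xs‖)
    (fun k => mul_nonneg (hmann_nonneg k) (hcombo_nonneg k)) hstep (n + 1)

theorem IG_upper_bound {X : Type*} [NormedAddCommGroup X] [NormedSpace ℝ X]
    (Ω : Set X) (hΩ : Convex ℝ Ω) (α₁ α₂ : ℝ)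
    (hα₁ : α₁ ∈ Set.Icc (0 : ℝ) 1) (hα₂ : α₂ ∈ Set.Icc (0 : ℝ) 1)
    (T₁ T₂ : X → X)
    (hT₁map : ∀ ξ ∈ Ω, T₁ ξ ∈ Ω) (hT₂map : ∀ ξ ∈ Ω, T₂ ξ ∈ Ω)
    (hT₁ : ∀ ξ ∈ Ω, ∀ η ∈ Ω, ‖T₁ ξ - T₁ η‖ ≤ α₁ * ‖ξ - η‖)
    (hT₂ : ∀ ξ ∈ Ω, ∀ η ∈ Ω, ‖T₂ ξ - T₂ η‖ ≤ α₂ * ‖ξ - η‖)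
    (xs : X) (hxs : xs ∈ Ω) (hfix₁ : T₁ xs = xs) (hfix₂ : T₂ xs = xs)
    (a b : ℕ → ℝ)
    (ha : ∀ n, a n ∈ Set.Icc (0 : ℝ) 1) (hb : ∀ n, b n ∈ Set.Icc (0 : ℝ) 1)
    (x y : ℕ → X) (hxΩ : ∀ n, x n ∈ Ω) (hyΩ : ∀ n, y n ∈ Ω)
    (hy : ∀ n, y n = (1 - a n) • x n + a n • T₁ (x n))
    (hx : ∀ n, x (n + 1) = (1 - b n) • T₁ (y n) + b n • T₂ (y n)) :
    ∀ n, ‖x (n + 1) - xs‖ ≤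
      (∏ k ∈ Finset.range (n + 1),
        (1 - (1 - α₁) * a k) * (α₁ + (α₂ - α₁) * b k)) * ‖x 0 - xs‖ :=
  IG_upper_bound_general Ω α₁ α₂ hα₁ hα₂ T₁ T₂ hT₁ hT₂ xs hxs hfix₁ hfix₂ a b ha hb x y hxΩ hyΩ hy
    hx
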